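/- Correctness of the Hyper Hoare Logic syntactic assume transformation: for every closed hyper-assertion φ, every test b, and every m : Set S, if m ∈ ⟦Π_b[φ]⟧ then { s ∈ m | ⟦b⟧(s) = true } ∈ ⟦φ⟧; that is, the rule ⟨Π_b[φ]⟩ assume b ⟨φ⟩ is valid in the nondeterministic instance, where ⟦assume b⟧†(m) = { s ∈ m | ⟦b⟧(s) = true }. -/

import Mathlib

open scoped Classical

/-! ## Program expressions and tests over stores -/

mutual
/-- Program expressions: variables, integer constants, tests, and arithmetic. -/
inductive PExpr (Var : Type) : Type where
  | const (v : ℤ)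
  | pvar (x : Var)
  | ofTest (b : PTest Var)
  | add (e₁ e₂ : PExpr Var)
  | sub (e₁ e₂ : PExpr Var)
  | mul (e₁ e₂ : PExpr Var)

/-- Tests over stores: Boolean combinations of primitive comparison tests. -/
inductive PTest (Var : Type) : Type where
  | tt
  | ff
  | eq (e₁ e₂ : PExpr Var)
  | le (e₁ e₂ : PExpr Var)
  | and (b₁ b₂ : PTest Var)
  | or (b₁ b₂ : PTest Var)
  | not (b : PTest Var)
end

mutual
/-- Evaluation of program expressions in a store. -/
def peval {Var : Type} : PExpr Var → (Var → ℤ) → ℤ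
  | .const v, _ => v
  | .pvar x, s => s x
  | .ofTest b, s => if ptval b s then 1 else 0
  | .add e₁ e₂, s => peval e₁ s + peval e₂ s
  | .sub e₁ e₂, s => peval e₁ s - peval e₂ s
  | .mul e₁ e₂, s => peval e₁ s * peval e₂ s

/-- Evaluation of tests in a store. -/
def ptval {Var : Type} : PTest Var → (Var → ℤ) → Bool
  | .tt, _ => Bool.true
  | .ff, _ => Bool.false
  | .eq e₁ e₂, s => decide (peval e₁ s = peval e₂ s)
  | .le e₁ e₂, s => decide (peval e₁ s ≤ peval e₂ s)
  | .and b₁ b₂, s => ptval b₁ s && ptval b₂ s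
  | .or b₁ b₂, s => ptval b₁ s || ptval b₂ s
  | .not b, s => ! ptval b s
end

/-! ## Hyper-expressions and hypertests -/

mutual
/-- Hyper-expressions: integer constants, value variables, terms `σ(x)`, lifted tests,
and arithmetic. -/
inductive HExpr (Var SVar VVar : Type) : Type where
  | const (v : ℤ)
  | vvar (v : VVar)
  | svar (σ : SVar) (x : Var)
  | ofTest (B : HTest Var SVar VVar)
  | add (e₁ e₂ : HExpr Var SVar VVar)
  | sub (e₁ e₂ : HExpr Var SVar VVar)
  | mul (e₁ e₂ : HExpr Var SVar VVar)

/-- Hypertests: Boolean combinations and comparisons of hyper-expressions. -/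
inductive HTest (Var SVar VVar : Type) : Type where
  | tt
  | ff
  | eq (e₁ e₂ : HExpr Var SVar VVar)
  | le (e₁ e₂ : HExpr Var SVar VVar)
  | and (B₁ B₂ : HTest Var SVar VVar)
  | or (B₁ B₂ : HTest Var SVar VVar)
  | not (B : HTest Var SVar VVar)
end

mutual
/-- Evaluation of hyper-expressions relative to environments for value variables and
(possibly unbound) state variables; `none` if an unbound state variable occurs. -/
def heval {Var SVar VVar : Type} (δ : VVar → ℤ) (ρ : SVar → Option (Var → ℤ)) :
    HExpr Var SVar VVar → Option ℤ
  | .const v => some v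
  | .vvar v => some (δ v)
  | .svar σ x => (ρ σ).map fun s => s x
  | .ofTest B => (htval δ ρ B).map fun b => if b then 1 else 0
  | .add e₁ e₂ => (heval δ ρ e₁).bind fun a => (heval δ ρ e₂).map fun b => a + b
  | .sub e₁ e₂ => (heval δ ρ e₁).bind fun a => (heval δ ρ e₂).map fun b => a - b
  | .mul e₁ e₂ => (heval δ ρ e₁).bind fun a => (heval δ ρ e₂).map fun b => a * b

/-- Evaluation of hypertests; `none` if an unbound state variable occurs. -/
def htval {Var SVar VVar : Type} (δ : VVar → ℤ) (ρ : SVar → Option (Var → ℤ)) :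
    HTest Var SVar VVar → Option Bool
  | .tt => some Bool.true
  | .ff => some Bool.false
  | .eq e₁ e₂ => (heval δ ρ e₁).bind fun a => (heval δ ρ e₂).map fun b => decide (a = b)
  | .le e₁ e₂ => (heval δ ρ e₁).bind fun a => (heval δ ρ e₂).map fun b => decide (a ≤ b)
  | .and B₁ B₂ => (htval δ ρ B₁).bind fun a => (htval δ ρ B₂).map fun b => a && b
  | .or B₁ B₂ => (htval δ ρ B₁).bind fun a => (htval δ ρ B₂).map fun b => a || b
  | .not B => (htval δ ρ B).map fun a => ! a
end

/-! ## Hyper-assertions and their semantics -/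

/-- Hyper-assertions. -/
inductive HAssert (Var SVar VVar : Type) : Type where
  | and (φ ψ : HAssert Var SVar VVar)
  | or (φ ψ : HAssert Var SVar VVar)
  | allV (v : VVar) (T : Set ℤ) (φ : HAssert Var SVar VVar)
  | exV (v : VVar) (T : Set ℤ) (φ : HAssert Var SVar VVar)
  | allS (σ : SVar) (φ : HAssert Var SVar VVar)
  | exS (σ : SVar) (φ : HAssert Var SVar VVar)
  | test (B : HTest Var SVar VVar)

/-- Semantics of hyper-assertions as sets of sets of stores, relative to environments
`δ` (value variables) and `ρ` (state variables; `none` = unbound). -/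
noncomputable def hsem {Var SVar VVar : Type} (δ : VVar → ℤ)
    (ρ : SVar → Option (Var → ℤ)) :
    HAssert Var SVar VVar → Set (Set (Var → ℤ))
  | .and φ ψ => hsem δ ρ φ ∩ hsem δ ρ ψ
  | .or φ ψ => hsem δ ρ φ ∪ hsem δ ρ ψ
  | .allV v T φ => ⋂ t ∈ T, hsem (Function.update δ v t) ρ φ
  | .exV v T φ => ⋃ t ∈ T, hsem (Function.update δ v t) ρ φ
  | .allS σ φ => { m | ∀ s ∈ m, m ∈ hsem δ (Function.update ρ σ (some s)) φ }
  | .exS σ φ => { m | ∃ s ∈ m, m ∈ hsem δ (Function.update ρ σ (some s)) φ }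
  | .test B => { m | htval δ ρ B = some Bool.true }

/-! ## Free variables and closedness -/

mutual
/-- Free state variables of a hyper-expression. -/
def efreeS {Var SVar VVar : Type} : HExpr Var SVar VVar → Set SVar
  | .const _ => ∅
  | .vvar _ => ∅
  | .svar σ _ => {σ}
  | .ofTest B => tfreeS B
  | .add e₁ e₂ => efreeS e₁ ∪ efreeS e₂
  | .sub e₁ e₂ => efreeS e₁ ∪ efreeS e₂
  | .mul e₁ e₂ => efreeS e₁ ∪ efreeS e₂

/-- Free state variables of a hypertest. -/
def tfreeS {Var SVar VVar : Type} : HTest Var SVar VVar → Set SVar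
  | .tt => ∅
  | .ff => ∅
  | .eq e₁ e₂ => efreeS e₁ ∪ efreeS e₂
  | .le e₁ e₂ => efreeS e₁ ∪ efreeS e₂
  | .and B₁ B₂ => tfreeS B₁ ∪ tfreeS B₂
  | .or B₁ B₂ => tfreeS B₁ ∪ tfreeS B₂
  | .not B => tfreeS B
end

mutual
/-- Free value variables of a hyper-expression. -/
def efreeV {Var SVar VVar : Type} : HExpr Var SVar VVar → Set VVar
  | .const _ => ∅
  | .vvar v => {v}
  | .svar _ _ => ∅
  | .ofTest B => tfreeV B
  | .add e₁ e₂ => efreeV e₁ ∪ efreeV e₂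
  | .sub e₁ e₂ => efreeV e₁ ∪ efreeV e₂
  | .mul e₁ e₂ => efreeV e₁ ∪ efreeV e₂

/-- Free value variables of a hypertest. -/
def tfreeV {Var SVar VVar : Type} : HTest Var SVar VVar → Set VVar
  | .tt => ∅
  | .ff => ∅
  | .eq e₁ e₂ => efreeV e₁ ∪ efreeV e₂
  | .le e₁ e₂ => efreeV e₁ ∪ efreeV e₂
  | .and B₁ B₂ => tfreeV B₁ ∪ tfreeV B₂
  | .or B₁ B₂ => tfreeV B₁ ∪ tfreeV B₂
  | .not B => tfreeV B
end

/-- Free state variables of a hyper-assertion. -/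
def afreeS {Var SVar VVar : Type} : HAssert Var SVar VVar → Set SVar
  | .and φ ψ => afreeS φ ∪ afreeS ψ
  | .or φ ψ => afreeS φ ∪ afreeS ψ
  | .allV _ _ φ => afreeS φ
  | .exV _ _ φ => afreeS φ
  | .allS σ φ => afreeS φ \ {σ}
  | .exS σ φ => afreeS φ \ {σ}
  | .test B => tfreeS B

/-- Free value variables of a hyper-assertion. -/
def afreeV {Var SVar VVar : Type} : HAssert Var SVar VVar → Set VVar
  | .and φ ψ => afreeV φ ∪ afreeV ψ
  | .or φ ψ => afreeV φ ∪ afreeV ψ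
  | .allV v _ φ => afreeV φ \ {v}
  | .exV v _ φ => afreeV φ \ {v}
  | .allS _ φ => afreeV φ
  | .exS _ φ => afreeV φ
  | .test B => tfreeV B

/-- A hyper-assertion is closed if it has no free state or value variables. -/
def closedA {Var SVar VVar : Type} (φ : HAssert Var SVar VVar) : Prop :=
  afreeS φ = ∅ ∧ afreeV φ = ∅

/-! ## The transformation `E[σ]`, `b[σ]` -/

mutual
/-- `E[σ]`: replace every program variable `y` of `E` by `σ(y)`. -/
def pToH {Var SVar VVar : Type} (σ : SVar) : PExpr Var → HExpr Var SVar VVar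
  | .const v => .const v
  | .pvar x => .svar σ x
  | .ofTest b => .ofTest (tToH σ b)
  | .add e₁ e₂ => .add (pToH σ e₁) (pToH σ e₂)
  | .sub e₁ e₂ => .sub (pToH σ e₁) (pToH σ e₂)
  | .mul e₁ e₂ => .mul (pToH σ e₁) (pToH σ e₂)

/-- `b[σ]`: replace every program variable `y` of `b` by `σ(y)`. -/
def tToH {Var SVar VVar : Type} (σ : SVar) : PTest Var → HTest Var SVar VVar
  | .tt => .tt
  | .ff => .ff
  | .eq e₁ e₂ => .eq (pToH σ e₁) (pToH σ e₂)
  | .le e₁ e₂ => .le (pToH σ e₁) (pToH σ e₂)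
  | .and b₁ b₂ => .and (tToH σ b₁) (tToH σ b₂)
  | .or b₁ b₂ => .or (tToH σ b₁) (tToH σ b₂)
  | .not b => .not (tToH σ b)
end

/-! ## The syntactic assume transformation `Π_b` -/

/-- The Hyper Hoare Logic syntactic transformation `Π_b` for assume statements:
it commutes with `∧`, `∨` and the value quantifiers, and
`Π_b[∀⟨σ⟩.φ] = ∀⟨σ⟩.(¬b[σ] ∨ Π_b[φ])`, `Π_b[∃⟨σ⟩.φ] = ∃⟨σ⟩.(b[σ] ∧ Π_b[φ])`,
`Π_b[B] = B`. -/
def Pitrans {Var SVar VVar : Type} (b : PTest Var) :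
    HAssert Var SVar VVar → HAssert Var SVar VVar
  | .and φ ψ => .and (Pitrans b φ) (Pitrans b ψ)
  | .or φ ψ => .or (Pitrans b φ) (Pitrans b ψ)
  | .allV v T φ => .allV v T (Pitrans b φ)
  | .exV v T φ => .exV v T (Pitrans b φ)
  | .allS σ φ => .allS σ (.or (.test (.not (tToH σ b))) (Pitrans b φ))
  | .exS σ φ => .exS σ (.and (.test (tToH σ b)) (Pitrans b φ))
  | .test B => .test B

/-! Proof by induction on `φ`, generalizing the environments. Once `σ` is bound to `s`, the
guard `b[σ]` evaluates to `⟦b⟧(s)`. Hence `∀⟨σ⟩. ¬b[σ] ∨ Π_b[φ]` only constrains the states that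
survive the filter, and a witness of `∃⟨σ⟩. b[σ] ∧ Π_b[φ]` survives it. Hypertests do not depend
on the set of states at all, so they need no guard. -/

mutual
theorem heval_pToH {Var SVar VVar : Type} (δ : VVar → ℤ) {ρ : SVar → Option (Var → ℤ)}
    {σ : SVar} {s : Var → ℤ} (hσ : ρ σ = some s) :
    ∀ e : PExpr Var, heval δ ρ (pToH (VVar := VVar) σ e) = some (peval e s)
  | .const _ => rfl
  | .pvar x => by simp [pToH, heval, peval, hσ]
  | .ofTest b => by simp [pToH, heval, peval, htval_tToH δ hσ b]
  | .add e₁ e₂ => by simp [pToH, heval, peval, heval_pToH δ hσ e₁, heval_pToH δ hσ e₂]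
  | .sub e₁ e₂ => by simp [pToH, heval, peval, heval_pToH δ hσ e₁, heval_pToH δ hσ e₂]
  | .mul e₁ e₂ => by simp [pToH, heval, peval, heval_pToH δ hσ e₁, heval_pToH δ hσ e₂]

theorem htval_tToH {Var SVar VVar : Type} (δ : VVar → ℤ) {ρ : SVar → Option (Var → ℤ)}
    {σ : SVar} {s : Var → ℤ} (hσ : ρ σ = some s) :
    ∀ b : PTest Var, htval δ ρ (tToH (VVar := VVar) σ b) = some (ptval b s)
  | .tt => rfl
  | .ff => rfl
  | .eq e₁ e₂ => by simp [tToH, htval, ptval, heval_pToH δ hσ e₁, heval_pToH δ hσ e₂]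
  | .le e₁ e₂ => by simp [tToH, htval, ptval, heval_pToH δ hσ e₁, heval_pToH δ hσ e₂]
  | .and b₁ b₂ => by simp [tToH, htval, ptval, htval_tToH δ hσ b₁, htval_tToH δ hσ b₂]
  | .or b₁ b₂ => by simp [tToH, htval, ptval, htval_tToH δ hσ b₁, htval_tToH δ hσ b₂]
  | .not b => by simp [tToH, htval, ptval, htval_tToH δ hσ b]
end

section Guards

variable {Var SVar VVar : Type} (δ : VVar → ℤ) (ρ : SVar → Option (Var → ℤ)) (σ : SVar)
  (s : Var → ℤ) (b : PTest Var) (m : Set (Var → ℤ))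

theorem mem_hsem_test_tToH_update_iff :
    m ∈ hsem δ (Function.update ρ σ (some s)) (.test (tToH σ b)) ↔ ptval b s = true := by
  simp [hsem, htval_tToH δ (Function.update_self σ (some s) ρ) b]

theorem mem_hsem_test_not_tToH_update_iff :
    m ∈ hsem δ (Function.update ρ σ (some s)) (.test (.not (tToH σ b))) ↔ ptval b s = false := by
  simp [hsem, htval, htval_tToH δ (Function.update_self σ (some s) ρ) b]

end Guards

theorem filter_mem_hsem_of_mem_hsem_Pitrans {Var SVar VVar : Type} (b : PTest Var)
    (φ : HAssert Var SVar VVar) {δ : VVar → ℤ} {ρ : SVar → Option (Var → ℤ)}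
    {m : Set (Var → ℤ)} (hm : m ∈ hsem δ ρ (Pitrans b φ)) :
    { s ∈ m | ptval b s = true } ∈ hsem δ ρ φ := by
  induction φ generalizing δ ρ with
  | and φ ψ ihφ ihψ => exact ⟨ihφ hm.1, ihψ hm.2⟩
  | or φ ψ ihφ ihψ => exact hm.imp ihφ ihψ
  | allV v T φ ih =>
    simp only [hsem, Pitrans, Set.mem_iInter] at hm ⊢
    exact fun t ht => ih (hm t ht)
  | exV v T φ ih =>
    simp only [hsem, Pitrans, Set.mem_iUnion] at hm ⊢
    obtain ⟨t, ht, h⟩ := hm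
    exact ⟨t, ht, ih h⟩
  | allS σ φ ih =>
    rintro s ⟨hsm, hbs⟩
    rcases hm s hsm with hguard | hφ
    · rw [mem_hsem_test_not_tToH_update_iff] at hguard
      simp [hguard] at hbs
    · exact ih hφ
  | exS σ φ ih =>
    obtain ⟨s, hsm, hguard, hφ⟩ := hm
    exact ⟨s, ⟨hsm, (mem_hsem_test_tToH_update_iff ..).1 hguard⟩, ih hφ⟩
  | test B => exact hm

/-- **Correctness of the Hyper Hoare Logic syntactic assume transformation**: for every
closed hyper-assertion `φ`, test `b` and `m`, if `m ∈ ⟦Π_b[φ]⟧` then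
`{s ∈ m | ⟦b⟧(s) = true} ∈ ⟦φ⟧`; i.e. the rule `⟨Π_b[φ]⟩ assume b ⟨φ⟩` is valid, where
`⟦assume b⟧†(m) = {s ∈ m | ⟦b⟧(s) = true}`. -/
theorem hhl_assume_transformation_correct {Var SVar VVar : Type}
    (b : PTest Var) (φ : HAssert Var SVar VVar) (hcl : closedA φ)
    (δ : VVar → ℤ) (ρ : SVar → Option (Var → ℤ)) (m : Set (Var → ℤ))
    (hm : m ∈ hsem δ ρ (Pitrans b φ)) :
    { s ∈ m | ptval b s = Bool.true } ∈ hsem δ ρ φ :=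
  filter_mem_hsem_of_mem_hsem_Pitrans b φ hm
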